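/- arXiv:2103.14834 — 7 statements merged into one kernel-verified Lean document; each statement's English description precedes it below -/
import Mathlib

section
/- If 1/2 < a ≤ 1, then for every initial point x⁽⁰⁾ ∈ (0,1/3], there exist n ∈ ℕ and a point p ∈ (1/3, (4a+1)/9] such that f_aⁿ(x⁽⁰⁾) = p and f_a(p) = p (so the trajectory reaches a fixed point in finitely many steps). -/
/-- Theorem 2.1(3): if `1/2 < a ≤ 1` then every trajectory starting in `(0,1/3]`
reaches a fixed point `p ∈ (1/3, (4a+1)/9]` in finitely many steps. -/
theorem fa_reaches_fixed_point (a : ℝ) (ha : 1/2 < a) (ha1 : a ≤ 1)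
    (f : ℝ → ℝ)
    (hf1 : ∀ x ∈ Set.Icc (0:ℝ) (1/3), f x = (1 - 2*a)*x^2 + 2*a*x)
    (hf2 : ∀ x ∈ Set.Ioc (1/3:ℝ) 1, f x = x) :
    ∀ x0 ∈ Set.Ioc (0:ℝ) (1/3),
      ∃ n : ℕ, ∃ p ∈ Set.Ioc (1/3:ℝ) ((4*a+1)/9), f^[n] x0 = p ∧ f p = p := by
  intro x0 hx0
  obtain ⟨hx0pos, hx0le⟩ := hx0
  set c : ℝ := (4*a+1)/3 with hc
  have hc1 : 1 < c := by rw [hc]; linarith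
  -- key facts about f on (0,1/3]
  have key : ∀ x : ℝ, 0 < x → x ≤ 1/3 →
      c * x ≤ f x ∧ f x ≤ (4*a+1)/9 := by
    intro x hx hx3
    have hfx : f x = (1 - 2*a)*x^2 + 2*a*x := hf1 x ⟨le_of_lt hx, hx3⟩
    constructor
    · rw [hfx, hc]
      nlinarith [mul_nonneg (mul_nonneg (by linarith : (0:ℝ) ≤ 2*a-1) hx.le)
        (by linarith : (0:ℝ) ≤ 1/3 - x)]
    · rw [hfx]
      nlinarith [mul_nonneg (show (0:ℝ) ≤ 1/3 - x by linarith)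
        (show (0:ℝ) ≤ 1/3 + x + 2*a*(2/3 - x) by nlinarith)]
  -- the orbit must leave (0,1/3]
  have hexit : ∃ n : ℕ, 1/3 < f^[n] x0 := by
    by_contra h
    push_neg at h
    have hall : ∀ n : ℕ, c^n * x0 ≤ f^[n] x0 ∧ 0 < f^[n] x0 := by
      intro n
      induction n with
      | zero => simpa using hx0pos
      | succ n ih =>
        obtain ⟨ih1, ih2⟩ := ih
        have h3 := h n
        obtain ⟨k1, _⟩ := key _ ih2 h3
        have : f^[n+1] x0 = f (f^[n] x0) := Function.iterate_succ_apply' f n x0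
        rw [this]
        constructor
        · calc c^(n+1) * x0 = c * (c^n * x0) := by ring
            _ ≤ c * f^[n] x0 := by
                have : (0:ℝ) < c := by linarith
                nlinarith
            _ ≤ f (f^[n] x0) := k1
        · calc (0:ℝ) < c * f^[n] x0 := by positivity
            _ ≤ f (f^[n] x0) := k1
    obtain ⟨n, hn⟩ := pow_unbounded_of_one_lt ((1/3)/x0) hc1
    have h1 := (hall n).1
    have h2 := h n
    have : (1/3)/x0 * x0 < c^n * x0 := by
      exact mul_lt_mul_of_pos_right hn hx0pos
    rw [div_mul_cancel₀ _ (ne_of_gt hx0pos)] at this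
    linarith
  -- take minimal exit time
  classical
  let N := Nat.find hexit
  have hN : 1/3 < f^[N] x0 := Nat.find_spec hexit
  have hNmin : ∀ m < N, f^[m] x0 ≤ 1/3 := fun m hm => by
    have := Nat.find_min hexit hm
    linarith [not_lt.mp this]
  have hNpos : 0 < N := by
    rcases Nat.eq_zero_or_pos N with h0 | h; · exfalso; rw [h0] at hN; simp at hN; linarith
    exact h
  -- all iterates before N stay in (0,1/3]
  have hstay : ∀ m < N, 0 < f^[m] x0 ∧ f^[m] x0 ≤ 1/3 := by
    intro m hm
    induction m with
    | zero => exact ⟨by simpa using hx0pos, by simpa using hx0le⟩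
    | succ m ih =>
      have hm' : m < N := Nat.lt_of_succ_lt hm
      obtain ⟨p1, p2⟩ := ih hm'
      obtain ⟨k1, _⟩ := key _ p1 p2
      refine ⟨?_, hNmin _ hm⟩
      have : f^[m+1] x0 = f (f^[m] x0) := Function.iterate_succ_apply' f m x0
      rw [this]
      calc (0:ℝ) < c * f^[m] x0 := by positivity
        _ ≤ f (f^[m] x0) := k1
  obtain ⟨q1, q2⟩ := hstay (N-1) (Nat.sub_lt hNpos one_pos)
  obtain ⟨_, k2⟩ := key _ q1 q2
  have hiter : f^[N] x0 = f (f^[N-1] x0) := by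
    conv_lhs => rw [show N = (N-1) + 1 from (Nat.succ_pred_eq_of_pos hNpos).symm]
    exact Function.iterate_succ_apply' f (N-1) x0
  refine ⟨N, f^[N] x0, ⟨hN, ?_⟩, rfl, ?_⟩
  · rw [hiter]; exact k2
  · apply hf2
    refine ⟨hN, ?_⟩
    rw [hiter]
    linarith
end

section
/- If 0 ≤ b < 1/2, then for every initial point x⁽⁰⁾ ∈ (1/3,2/3), there exist n ∈ ℕ and a point p ∈ [(1+4b)/9, 1/3] such that f_bⁿ(x⁽⁰⁾) = p and f_b(p) = p (so the trajectory reaches a fixed point in finitely many steps). -/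
/-- Theorem 2.2(2): if `0 ≤ b < 1/2` then every trajectory starting in `(1/3,2/3)`
reaches a fixed point `p ∈ [(1+4b)/9, 1/3]` in finitely many steps. -/
theorem fb_reaches_fixed_point (b : ℝ) (hb0 : 0 ≤ b) (hb : b < 1/2)
    (f : ℝ → ℝ)
    (hf1 : ∀ x ∈ Set.Icc (0:ℝ) (1/3) ∪ Set.Icc (2/3:ℝ) 1, f x = x)
    (hf2 : ∀ x ∈ Set.Ioo (1/3:ℝ) (2/3), f x = (1 - 2*b)*x^2 + 2*b*x) :
    ∀ x0 ∈ Set.Ioo (1/3:ℝ) (2/3),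
      ∃ n : ℕ, ∃ p ∈ Set.Icc ((1+4*b)/9) (1/3:ℝ), f^[n] x0 = p ∧ f p = p := by
  intro x0 hx0
  set δ : ℝ := (1 - 2*b)/9 with hδdef
  have hδ : 0 < δ := by rw [hδdef]; linarith
  have step : ∀ y ∈ Set.Ioo (1/3:ℝ) (2/3), f y ≤ y - δ ∧ (1+4*b)/9 ≤ f y := by
    intro y hy
    obtain ⟨h1, h2⟩ := hy
    rw [hf2 y ⟨h1, h2⟩, hδdef]
    constructor
    · nlinarith [mul_nonneg (mul_nonneg (by linarith : (0:ℝ) ≤ 1 - 2*b) (by linarith : (0:ℝ) ≤ y - 1/3)) (by linarith : (0:ℝ) ≤ 2/3 - y)]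
    · nlinarith [sq_nonneg (y - 1/3)]
  have main : ∀ k : ℕ, ∀ x ∈ Set.Ioo (1/3:ℝ) (2/3), x - k*δ ≤ 1/3 →
      ∃ n : ℕ, ∃ p ∈ Set.Icc ((1+4*b)/9) (1/3:ℝ), f^[n] x = p ∧ f p = p := by
    intro k
    induction k with
    | zero =>
      intro x hx hle
      exfalso
      simp only [Nat.cast_zero, zero_mul, sub_zero] at hle
      linarith [hx.1]
    | succ k ih =>
      intro x hx hle
      obtain ⟨hdec, hlow⟩ := step x hx
      by_cases hfx : f x ∈ Set.Ioo (1/3:ℝ) (2/3)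
      · obtain ⟨n, p, hp, heq, hfix⟩ := ih (f x) hfx (by push_cast at hle ⊢; linarith)
        exact ⟨n+1, p, hp, by rwa [Function.iterate_succ_apply], hfix⟩
      · have h2 : f x < 2/3 := by linarith [hx.2]
        have h3 : f x ≤ 1/3 := by
          by_contra h
          push_neg at h
          exact hfx ⟨h, h2⟩
        refine ⟨1, f x, ⟨hlow, h3⟩, by simp, ?_⟩
        apply hf1
        left
        exact ⟨by linarith, h3⟩
  obtain ⟨k, hk⟩ := exists_nat_gt ((x0 - 1/3)/δ)
  have hk' : x0 - k*δ ≤ 1/3 := by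
    rw [div_lt_iff₀ hδ] at hk; linarith
  exact main k x0 hx0 hk'
end

section
/- If 0 ≤ a < 1/2 and 0 ≤ b < 1/2, then for every initial point x⁽⁰⁾ ∈ [0,2/3), the sequence of iterates x⁽ⁿ⁾ = f_{a,b}ⁿ(x⁽⁰⁾) converges to 0 as n → ∞. -/
/-- Theorem 2.4(2): if `0 ≤ a < 1/2` and `0 ≤ b < 1/2` then every trajectory
starting in `[0,2/3)` converges to `0`. -/
theorem fab_tendsto_zero (a b : ℝ) (ha0 : 0 ≤ a) (ha : a < 1/2)
    (hb0 : 0 ≤ b) (hb : b < 1/2)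
    (f : ℝ → ℝ)
    (hf1 : ∀ x ∈ Set.Icc (0:ℝ) (1/3), f x = (1 - 2*a)*x^2 + 2*a*x)
    (hf2 : ∀ x ∈ Set.Ioo (1/3:ℝ) (2/3), f x = (1 - 2*b)*x^2 + 2*b*x)
    (hf3 : ∀ x ∈ Set.Icc (2/3:ℝ) 1, f x = x) :
    ∀ x0 ∈ Set.Ico (0:ℝ) (2/3),
      Filter.Tendsto (fun n => f^[n] x0) Filter.atTop (nhds 0) := by
  intro x0 hx0
  obtain ⟨hx00, hx02⟩ := hx0
  set r : ℝ := max ((1+4*a)/3) ((2+2*b)/3) with hrdef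
  have hr0 : (0:ℝ) ≤ r := le_trans (by linarith) (le_max_left _ _)
  have hr1 : r < 1 := max_lt (by linarith) (by linarith)
  have key : ∀ x : ℝ, 0 ≤ x → x < 2/3 → 0 ≤ f x ∧ f x ≤ r * x := by
    intro x hx0' hx2
    rcases le_or_gt x (1/3) with h | h
    · rw [hf1 x ⟨hx0', h⟩]
      refine ⟨by nlinarith, ?_⟩
      have h1 : (1 - 2*a)*x^2 + 2*a*x ≤ (1+4*a)/3 * x := by nlinarith [mul_nonneg (mul_nonneg (by linarith : (0:ℝ) ≤ 1-2*a) hx0') (by linarith : (0:ℝ) ≤ 1/3 - x)]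
      exact h1.trans (mul_le_mul_of_nonneg_right (le_max_left _ _) hx0')
    · rw [hf2 x ⟨h, hx2⟩]
      refine ⟨by nlinarith, ?_⟩
      have h1 : (1 - 2*b)*x^2 + 2*b*x ≤ (2+2*b)/3 * x := by nlinarith [mul_nonneg (mul_nonneg (by linarith : (0:ℝ) ≤ 1-2*b) hx0') (by linarith : (0:ℝ) ≤ 2/3 - x)]
      exact h1.trans (mul_le_mul_of_nonneg_right (le_max_right _ _) hx0')
  have hiter : ∀ n, 0 ≤ f^[n] x0 ∧ f^[n] x0 ≤ r^n * x0 := by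
    intro n
    induction n with
    | zero => simpa using hx00
    | succ n ih =>
      have hpow : r^n ≤ 1 := pow_le_one₀ hr0 hr1.le
      have h2 : f^[n] x0 < 2/3 := by
        refine lt_of_le_of_lt ih.2 (lt_of_le_of_lt ?_ hx02)
        nlinarith [ih.1]
      rw [Function.iterate_succ_apply']
      obtain ⟨hfnn, hfle⟩ := key _ ih.1 h2
      refine ⟨hfnn, hfle.trans ?_⟩
      calc r * f^[n] x0 ≤ r * (r^n * x0) := by
            exact mul_le_mul_of_nonneg_left ih.2 hr0
        _ = r^(n+1) * x0 := by ring
  have hlim : Filter.Tendsto (fun n => r^n * x0) Filter.atTop (nhds 0) := by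
    simpa using (tendsto_pow_atTop_nhds_zero_of_lt_one hr0 hr1).mul_const x0
  exact squeeze_zero (fun n => (hiter n).1) (fun n => (hiter n).2) hlim
end

section
/- If 1/2 < a ≤ 1 and 1/2 < b ≤ 1, then for every initial point x⁽⁰⁾ ∈ (0,2/3), there exist n ∈ ℕ and a point p ∈ [2/3, 4(1+b)/9) such that f_{a,b}ⁿ(x⁽⁰⁾) = p and f_{a,b}(p) = p (so the trajectory reaches a fixed point in finitely many steps). -/
/-- Theorem 2.4(5): if `1/2 < a ≤ 1` and `1/2 < b ≤ 1` then every trajectory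
starting in `(0,2/3)` reaches a fixed point `p ∈ [2/3, 4(1+b)/9)` in finitely
many steps. -/
theorem fab_reaches_fixed_point (a b : ℝ) (ha : 1/2 < a) (ha1 : a ≤ 1)
    (hb : 1/2 < b) (hb1 : b ≤ 1)
    (f : ℝ → ℝ)
    (hf1 : ∀ x ∈ Set.Icc (0:ℝ) (1/3), f x = (1 - 2*a)*x^2 + 2*a*x)
    (hf2 : ∀ x ∈ Set.Ioo (1/3:ℝ) (2/3), f x = (1 - 2*b)*x^2 + 2*b*x)
    (hf3 : ∀ x ∈ Set.Icc (2/3:ℝ) 1, f x = x) :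
    ∀ x0 ∈ Set.Ioo (0:ℝ) (2/3),
      ∃ n : ℕ, ∃ p ∈ Set.Ico (2/3:ℝ) (4*(1+b)/9), f^[n] x0 = p ∧ f p = p := by
  intro x0 hx0
  obtain ⟨hx0p, hx0lt⟩ := hx0
  have hm : (1:ℝ)/2 < min a b := lt_min ha hb
  have hma : min a b ≤ a := min_le_left a b
  have hmb : min a b ≤ b := min_le_right a b
  set δ := (2 * min a b - 1) * x0 / 3 with hδ
  have hδpos : 0 < δ := by
    apply div_pos (mul_pos (by linarith) hx0p) (by norm_num)
  have key : ∀ x, x0 ≤ x → x < 2/3 → x + δ ≤ f x ∧ f x < 4*(1+b)/9 := by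
    intro x hx1 hx2
    have hxpos : 0 < x := lt_of_lt_of_le hx0p hx1
    rcases le_or_gt x (1/3) with h | h
    · rw [hf1 x ⟨le_of_lt hxpos, h⟩]
      constructor
      · have h1 : (2 * min a b - 1) * x0 ≤ (2 * a - 1) * x := by
          apply mul_le_mul (by linarith) hx1 hx0p.le (by linarith)
        nlinarith [mul_pos (show (0:ℝ) < 2*a - 1 by linarith) hxpos,
          mul_le_mul_of_nonneg_left h (show (0:ℝ) ≤ 2*a - 1 by linarith)]
      · nlinarith [mul_nonneg (show (0:ℝ) ≤ 1/3 - x by linarith)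
          (show (0:ℝ) ≤ 2*a - 1 by linarith), sq_nonneg x]
    · rw [hf2 x ⟨h, hx2⟩]
      constructor
      · have h1 : (2 * min a b - 1) * x0 ≤ (2 * b - 1) * x := by
          apply mul_le_mul (by linarith) hx1 hx0p.le (by linarith)
        nlinarith [mul_pos (show (0:ℝ) < 2*b - 1 by linarith) hxpos,
          mul_le_mul_of_nonneg_left h.le (show (0:ℝ) ≤ 2*b - 1 by linarith)]
      · nlinarith [mul_nonneg (show (0:ℝ) ≤ 2/3 - x by linarith)
          (show (0:ℝ) ≤ 2*b - 1 by linarith)]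
  have main : ∀ k : ℕ, ∀ x, x0 ≤ x → x < 2/3 → (2:ℝ)/3 ≤ x + k * δ →
      ∃ n, f^[n] x ∈ Set.Ico (2/3:ℝ) (4*(1+b)/9) := by
    intro k
    induction k with
    | zero =>
      intro x h1 h2 h3
      simp only [Nat.cast_zero, zero_mul, add_zero] at h3
      linarith
    | succ k ih =>
      intro x h1 h2 h3
      obtain ⟨hlow, hup⟩ := key x h1 h2
      by_cases hc : f x < 2/3
      · have h1' : x0 ≤ f x := by linarith
        have h3' : (2:ℝ)/3 ≤ f x + k * δ := by
          push_cast at h3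
          linarith
        obtain ⟨n, hn⟩ := ih (f x) h1' hc h3'
        exact ⟨n + 1, by rwa [Function.iterate_succ_apply]⟩
      · exact ⟨1, by simpa using ⟨not_lt.1 hc, hup⟩⟩
  obtain ⟨k, hk⟩ := exists_nat_ge ((2/3) / δ)
  have hkδ : (2:ℝ)/3 ≤ x0 + k * δ := by
    have := (div_le_iff₀ hδpos).mp hk
    linarith
  obtain ⟨n, hn⟩ := main k x0 le_rfl hx0lt hkδ
  refine ⟨n, f^[n] x0, hn, rfl, ?_⟩
  apply hf3
  exact ⟨hn.1, by have := hn.2; linarith⟩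
end

section
/- For each pair of real numbers x₁, x₂ with x₁ ∈ (1 − √6/3, 1/3) and x₂ ∈ (1/3, x₁(2 − x₁)), there exists a unique pair of real numbers (a, b) satisfying the system (1-2a)x₁² + 2ax₁ = x₂ and (1-2b)x₂² + 2bx₂ = x₁; moreover this unique pair satisfies 1/2 < a < 1 and 0 < b < 1/2, and is given explicitly by a = (x₂ − x₁²)/(2x₁(1 − x₁)) and b = (x₁ − x₂²)/(2x₂(1 − x₂)). Consequently {x₁, x₂} is a 2-periodic orbit of the map f_{a,b}: f_{a,b}(x₁) = x₂ and f_{a,b}(x₂) = x₁. -/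
/-!
Since `(1 - 2c)x² + 2cx = x² + 2c·x(1 - x)` is affine in `c` with nonzero slope for `0 < x < 1`,
each equation of the system has exactly one solution, given by the explicit formula. The bounds on
`a` and `b` then reduce to `x₁ < x₂ < x₁(2 - x₁)` and `x₂² < x₁`; the last follows from
`x₂² < (x₁(2 - x₁))² < x₁` when `x₁ < 1/3`.
-/

open Set

def branchMap (c x : ℝ) : ℝ := (1 - 2 * c) * x ^ 2 + 2 * c * x

noncomputable def branchParam (x y : ℝ) : ℝ := (y - x ^ 2) / (2 * x * (1 - x))

lemma branchMap_eq_sq_add (c x : ℝ) : branchMap c x = x ^ 2 + c * (2 * x * (1 - x)) := by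
  unfold branchMap; ring

section BranchParam

variable {x y : ℝ}

lemma two_mul_mul_one_sub_pos (hx : x ∈ Ioo 0 1) : 0 < 2 * x * (1 - x) :=
  mul_pos (mul_pos two_pos hx.1) (sub_pos.2 hx.2)

lemma branchMap_eq_iff {c : ℝ} (hx : x ∈ Ioo 0 1) : branchMap c x = y ↔ c = branchParam x y := by
  rw [branchParam, eq_div_iff (two_mul_mul_one_sub_pos hx).ne', branchMap_eq_sq_add]
  constructor <;> intro h <;> linarith

lemma half_lt_branchParam_iff (hx : x ∈ Ioo 0 1) : 1 / 2 < branchParam x y ↔ x < y := by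
  rw [branchParam, lt_div_iff₀ (two_mul_mul_one_sub_pos hx)]
  constructor <;> intro h <;> linarith

lemma branchParam_lt_one_iff (hx : x ∈ Ioo 0 1) : branchParam x y < 1 ↔ y < x * (2 - x) := by
  rw [branchParam, div_lt_iff₀ (two_mul_mul_one_sub_pos hx)]
  constructor <;> intro h <;> linarith

lemma branchParam_pos_iff (hx : x ∈ Ioo 0 1) : 0 < branchParam x y ↔ x ^ 2 < y := by
  rw [branchParam, lt_div_iff₀ (two_mul_mul_one_sub_pos hx)]
  constructor <;> intro h <;> linarith

lemma branchParam_lt_half_iff (hx : x ∈ Ioo 0 1) : branchParam x y < 1 / 2 ↔ y < x := by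
  rw [branchParam, div_lt_iff₀ (two_mul_mul_one_sub_pos hx)]
  constructor <;> intro h <;> linarith

end BranchParam

/-- `x₁ - (x₁(2 - x₁))² = x₁(1 - x₁)(x₁² - 3x₁ + 1)`, positive for `0 < x₁ < 1/3`. -/
lemma sq_lt_of_lt_mul_two_sub {x₁ x₂ : ℝ} (h₁ : x₁ ∈ Ioo 0 (1 / 3)) (hx₂ : 0 < x₂)
    (h : x₂ < x₁ * (2 - x₁)) : x₂ ^ 2 < x₁ := by
  obtain ⟨h₁0, h₁3⟩ := h₁
  have hbound : (x₁ * (2 - x₁)) ^ 2 < x₁ := by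
    nlinarith [mul_pos h₁0 (mul_pos (by linarith : (0:ℝ) < 1 - x₁)
      (by nlinarith : (0:ℝ) < x₁ ^ 2 - 3 * x₁ + 1))]
  exact (pow_lt_pow_left₀ h hx₂.le two_ne_zero).trans hbound

theorem two_periodic_orbit_general (x1 x2 : ℝ)
    (hx1 : x1 ∈ Set.Ioo (1 - Real.sqrt 6 / 3) (1/3:ℝ))
    (hx2 : x2 ∈ Set.Ioo (1/3:ℝ) (x1*(2-x1)))
    (a b : ℝ)
    (hadef : a = (x2 - x1^2)/(2*x1*(1-x1)))
    (hbdef : b = (x1 - x2^2)/(2*x2*(1-x2)))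
    (f : ℝ → ℝ)
    (hf1 : ∀ x ∈ Set.Icc (0:ℝ) (1/3), f x = (1 - 2*a)*x^2 + 2*a*x)
    (hf2 : ∀ x ∈ Set.Ioo (1/3:ℝ) (2/3), f x = (1 - 2*b)*x^2 + 2*b*x) :
    (∃! p : ℝ × ℝ,
      (1 - 2*p.1)*x1^2 + 2*p.1*x1 = x2 ∧ (1 - 2*p.2)*x2^2 + 2*p.2*x2 = x1) ∧
    ((1 - 2*a)*x1^2 + 2*a*x1 = x2 ∧ (1 - 2*b)*x2^2 + 2*b*x2 = x1) ∧
    (1/2 < a ∧ a < 1) ∧ (0 < b ∧ b < 1/2) ∧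
    (f x1 = x2 ∧ f x2 = x1) := by
  obtain ⟨hx1l, hx1r⟩ := hx1
  obtain ⟨hx2l, hx2r⟩ := hx2
  have hx1pos : 0 < x1 := by
    nlinarith [Real.sq_sqrt (by norm_num : (0:ℝ) ≤ 6), Real.sqrt_nonneg 6]
  have hx2lt : x2 < 5 / 9 := by nlinarith
  have hx1' : x1 ∈ Ioo 0 1 := ⟨hx1pos, by linarith⟩
  have hx2' : x2 ∈ Ioo 0 1 := ⟨by linarith, by linarith⟩
  have ha : a = branchParam x1 x2 := hadef
  have hb : b = branchParam x2 x1 := hbdef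
  have eq1 : branchMap a x1 = x2 := (branchMap_eq_iff hx1').2 ha
  have eq2 : branchMap b x2 = x1 := (branchMap_eq_iff hx2').2 hb
  refine ⟨⟨(a, b), ⟨eq1, eq2⟩, fun p hp => Prod.ext ?_ ?_⟩, ⟨eq1, eq2⟩, ⟨?_, ?_⟩, ⟨?_, ?_⟩,
    ?_, ?_⟩
  · exact ((branchMap_eq_iff hx1').1 hp.1).trans ha.symm
  · exact ((branchMap_eq_iff hx2').1 hp.2).trans hb.symm
  · exact ha ▸ (half_lt_branchParam_iff hx1').2 (by linarith)
  · exact ha ▸ (branchParam_lt_one_iff hx1').2 hx2r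
  · exact hb ▸ (branchParam_pos_iff hx2').2
      (sq_lt_of_lt_mul_two_sub ⟨hx1pos, hx1r⟩ hx2'.1 hx2r)
  · exact hb ▸ (branchParam_lt_half_iff hx2').2 (by linarith)
  · exact (hf1 x1 ⟨hx1pos.le, hx1r.le⟩).trans eq1
  · exact (hf2 x2 ⟨hx2l, by linarith⟩).trans eq2

/-- Theorem on 2-periodic points: for `x₁ ∈ (1 - √6/3, 1/3)` and
`x₂ ∈ (1/3, x₁(2-x₁))` there is a unique pair `(a,b)` solving the system
`(1-2a)x₁² + 2a x₁ = x₂`, `(1-2b)x₂² + 2b x₂ = x₁`; it satisfies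
`1/2 < a < 1`, `0 < b < 1/2`, is given by the explicit formulas, and
`{x₁, x₂}` is a 2-periodic orbit of `f_{a,b}`. -/
theorem two_periodic_orbit (x1 x2 : ℝ)
    (hx1 : x1 ∈ Set.Ioo (1 - Real.sqrt 6 / 3) (1/3:ℝ))
    (hx2 : x2 ∈ Set.Ioo (1/3:ℝ) (x1*(2-x1)))
    (a b : ℝ)
    (hadef : a = (x2 - x1^2)/(2*x1*(1-x1)))
    (hbdef : b = (x1 - x2^2)/(2*x2*(1-x2)))
    (f : ℝ → ℝ)
    (hf1 : ∀ x ∈ Set.Icc (0:ℝ) (1/3), f x = (1 - 2*a)*x^2 + 2*a*x)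
    (hf2 : ∀ x ∈ Set.Ioo (1/3:ℝ) (2/3), f x = (1 - 2*b)*x^2 + 2*b*x)
    (hf3 : ∀ x ∈ Set.Icc (2/3:ℝ) 1, f x = x) :
    (∃! p : ℝ × ℝ,
      (1 - 2*p.1)*x1^2 + 2*p.1*x1 = x2 ∧ (1 - 2*p.2)*x2^2 + 2*p.2*x2 = x1) ∧
    ((1 - 2*a)*x1^2 + 2*a*x1 = x2 ∧ (1 - 2*b)*x2^2 + 2*b*x2 = x1) ∧
    (1/2 < a ∧ a < 1) ∧ (0 < b ∧ b < 1/2) ∧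
    (f x1 = x2 ∧ f x2 = x1) :=
  two_periodic_orbit_general x1 x2 hx1 hx2 a b hadef hbdef f hf1 hf2
end

section
/- If 1/2 < b ≤ 1 and 1/2 < c ≤ 1, then for every initial point x⁽⁰⁾ ∈ (1/3,1], the sequence of iterates x⁽ⁿ⁾ = f_{b,c}ⁿ(x⁽⁰⁾) converges to 1 as n → ∞. -/
/-- Theorem 2.6(5): if `1/2 < b ≤ 1` and `1/2 < c ≤ 1` then every trajectory
starting in `(1/3,1]` converges to `1`. -/
theorem fbc_tendsto_one (b c : ℝ) (hb : 1/2 < b) (hb1 : b ≤ 1)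
    (hc : 1/2 < c) (hc1 : c ≤ 1)
    (f : ℝ → ℝ)
    (hf1 : ∀ x ∈ Set.Icc (0:ℝ) (1/3), f x = x)
    (hf2 : ∀ x ∈ Set.Ioo (1/3:ℝ) (2/3), f x = (1 - 2*b)*x^2 + 2*b*x)
    (hf3 : ∀ x ∈ Set.Icc (2/3:ℝ) 1, f x = (1 - 2*c)*x^2 + 2*c*x) :
    ∀ x0 ∈ Set.Ioc (1/3:ℝ) 1,
      Filter.Tendsto (fun n => f^[n] x0) Filter.atTop (nhds 1) := by
  intro x0 hx0
  set κ := min (2*b-1) (2*c-1) with hκ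
  have hκb : κ ≤ 2*b - 1 := min_le_left _ _
  have hκc : κ ≤ 2*c - 1 := min_le_right _ _
  have hκ0 : 0 < κ := lt_min (by linarith) (by linarith)
  have hκ1 : κ ≤ 1 := le_trans hκb (by linarith)
  set r := 1 - κ/3 with hr
  have hr0 : 0 ≤ r := by rw [hr]; linarith
  have hr1 : r < 1 := by rw [hr]; linarith
  have key : ∀ x ∈ Set.Ioc (1/3:ℝ) 1,
      f x ∈ Set.Ioc (1/3:ℝ) 1 ∧ 1 - f x ≤ r * (1 - x) := by
    intro x hx
    obtain ⟨hx1, hx2⟩ := hx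
    have hx0' : (0:ℝ) ≤ x := by linarith
    have hx1' : (0:ℝ) ≤ 1 - x := by linarith
    by_cases h : x < 2/3
    · have hfx : f x = (1 - 2*b)*x^2 + 2*b*x := hf2 x ⟨hx1, h⟩
      have hb0 : (0:ℝ) ≤ 2*b - 1 := by linarith
      have h1 : (0:ℝ) ≤ (2*b-1) * x * (1-x) :=
        mul_nonneg (mul_nonneg hb0 hx0') hx1'
      have h2 : (0:ℝ) ≤ 1 - (2*b-1)*x := by nlinarith
      have h3 : (0:ℝ) ≤ (1-x) * (1 - (2*b-1)*x) := mul_nonneg hx1' h2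
      have h4 : (0:ℝ) ≤ (1-x) * ((2*b-1)*x - κ/3) := by
        apply mul_nonneg hx1'
        have : κ/3 ≤ (2*b-1)*x := by nlinarith
        linarith
      have e1 : (1 - 2*b)*x^2 + 2*b*x - x = (2*b-1)*x*(1-x) := by ring
      have e2 : 1 - ((1 - 2*b)*x^2 + 2*b*x) = (1-x)*(1-(2*b-1)*x) := by ring
      have e3 : (1-κ/3)*(1-x) - (1 - ((1 - 2*b)*x^2 + 2*b*x))
          = (1-x)*((2*b-1)*x - κ/3) := by ring
      refine ⟨⟨?_, ?_⟩, ?_⟩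
      · rw [hfx]; linarith
      · rw [hfx]; linarith
      · rw [hfx, hr]; linarith
    · have hfx : f x = (1 - 2*c)*x^2 + 2*c*x := hf3 x ⟨le_of_not_gt h, hx2⟩
      have hc0 : (0:ℝ) ≤ 2*c - 1 := by linarith
      have h1 : (0:ℝ) ≤ (2*c-1) * x * (1-x) :=
        mul_nonneg (mul_nonneg hc0 hx0') hx1'
      have h2 : (0:ℝ) ≤ 1 - (2*c-1)*x := by nlinarith
      have h3 : (0:ℝ) ≤ (1-x) * (1 - (2*c-1)*x) := mul_nonneg hx1' h2
      have h4 : (0:ℝ) ≤ (1-x) * ((2*c-1)*x - κ/3) := by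
        apply mul_nonneg hx1'
        have : κ/3 ≤ (2*c-1)*x := by nlinarith
        linarith
      have e1 : (1 - 2*c)*x^2 + 2*c*x - x = (2*c-1)*x*(1-x) := by ring
      have e2 : 1 - ((1 - 2*c)*x^2 + 2*c*x) = (1-x)*(1-(2*c-1)*x) := by ring
      have e3 : (1-κ/3)*(1-x) - (1 - ((1 - 2*c)*x^2 + 2*c*x))
          = (1-x)*((2*c-1)*x - κ/3) := by ring
      refine ⟨⟨?_, ?_⟩, ?_⟩
      · rw [hfx]; linarith
      · rw [hfx]; linarith
      · rw [hfx, hr]; linarith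
  have main : ∀ n, f^[n] x0 ∈ Set.Ioc (1/3:ℝ) 1 ∧
      1 - f^[n] x0 ≤ r ^ n * (1 - x0) := by
    intro n
    induction n with
    | zero => simpa using hx0
    | succ n ih =>
      obtain ⟨hmem, hle⟩ := ih
      rw [Function.iterate_succ_apply']
      obtain ⟨hm2, hl2⟩ := key _ hmem
      refine ⟨hm2, ?_⟩
      calc 1 - f (f^[n] x0) ≤ r * (1 - f^[n] x0) := hl2
        _ ≤ r * (r ^ n * (1 - x0)) := mul_le_mul_of_nonneg_left hle hr0
        _ = r ^ (n+1) * (1 - x0) := by ring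
  have h0 : Filter.Tendsto (fun n => 1 - f^[n] x0) Filter.atTop (nhds 0) := by
    apply squeeze_zero (fun n => by linarith [(main n).1.2]) (fun n => (main n).2)
    have hp : Filter.Tendsto (fun n : ℕ => r ^ n) Filter.atTop (nhds 0) :=
      tendsto_pow_atTop_nhds_zero_of_lt_one hr0 hr1
    simpa using hp.mul_const (1 - x0)
  have := h0.const_sub 1
  simpa using this
end

section
/- If 0 ≤ a < 1/2, 0 ≤ b < 1/2 and 1/2 < c ≤ 1, then the iterates x⁽ⁿ⁾ = f_{a,b,c}ⁿ(x⁽⁰⁾) converge to 0 for every initial point x⁽⁰⁾ ∈ [0,2/3), and converge to 1 for every initial point x⁽⁰⁾ ∈ [2/3,1]. -/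
/-- Theorem 2.7(3): if `0 ≤ a < 1/2`, `0 ≤ b < 1/2`, `1/2 < c ≤ 1` then
trajectories starting in `[0,2/3)` converge to `0` and trajectories starting in
`[2/3,1]` converge to `1`. -/
theorem fabc_dichotomy (a b c : ℝ) (ha0 : 0 ≤ a) (ha : a < 1/2)
    (hb0 : 0 ≤ b) (hb : b < 1/2) (hc : 1/2 < c) (hc1 : c ≤ 1)
    (f : ℝ → ℝ)
    (hf1 : ∀ x ∈ Set.Icc (0:ℝ) (1/3), f x = (1 - 2*a)*x^2 + 2*a*x)
    (hf2 : ∀ x ∈ Set.Ioo (1/3:ℝ) (2/3), f x = (1 - 2*b)*x^2 + 2*b*x)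
    (hf3 : ∀ x ∈ Set.Icc (2/3:ℝ) 1, f x = (1 - 2*c)*x^2 + 2*c*x) :
    (∀ x0 ∈ Set.Ico (0:ℝ) (2/3),
      Filter.Tendsto (fun n => f^[n] x0) Filter.atTop (nhds 0)) ∧
    (∀ x0 ∈ Set.Icc (2/3:ℝ) 1,
      Filter.Tendsto (fun n => f^[n] x0) Filter.atTop (nhds 1)) := by
  constructor
  · intro x0 hx0
    set r : ℝ := max ((1+4*a)/3) ((2+2*b)/3) with hr
    have hr0 : 0 ≤ r := le_trans (by linarith) (le_max_left _ _)
    have hr1 : r < 1 := max_lt (by linarith) (by linarith)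
    have key : ∀ x, x ∈ Set.Ico (0:ℝ) (2/3) → 0 ≤ f x ∧ f x ≤ r * x := by
      intro x hx
      obtain ⟨hx0', hx2⟩ := hx
      by_cases h13 : x ≤ 1/3
      · rw [hf1 x ⟨hx0', h13⟩]
        constructor
        · nlinarith
        · have : (1+4*a)/3 ≤ r := le_max_left _ _
          nlinarith [mul_nonneg (mul_nonneg hx0' (by linarith : (0:ℝ) ≤ 1 - 2*a)) (by linarith : (0:ℝ) ≤ 1/3 - x)]
      · push_neg at h13
        rw [hf2 x ⟨h13, hx2⟩]
        constructor
        · nlinarith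
        · have : (2+2*b)/3 ≤ r := le_max_right _ _
          nlinarith [mul_nonneg (mul_nonneg hx0' (by linarith : (0:ℝ) ≤ 1 - 2*b)) (by linarith : (0:ℝ) ≤ 2/3 - x)]
    have main : ∀ n : ℕ, f^[n] x0 ∈ Set.Ico (0:ℝ) (2/3) ∧ f^[n] x0 ≤ r ^ n * x0 := by
      intro n
      induction n with
      | zero => simpa using hx0
      | succ n ih =>
        obtain ⟨hmem, hle⟩ := ih
        obtain ⟨h0, h1⟩ := key _ hmem
        rw [Function.iterate_succ_apply']
        have hle' : f (f^[n] x0) ≤ r ^ (n+1) * x0 := by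
          calc f (f^[n] x0) ≤ r * f^[n] x0 := h1
            _ ≤ r * (r ^ n * x0) := by
                exact mul_le_mul_of_nonneg_left hle hr0
            _ = r ^ (n+1) * x0 := by ring
        refine ⟨⟨h0, ?_⟩, hle'⟩
        have : r * f^[n] x0 < 2/3 := by
          have h2 : f^[n] x0 < 2/3 := hmem.2
          nlinarith [hmem.1]
        linarith
    have htend : Filter.Tendsto (fun n : ℕ => r ^ n * x0) Filter.atTop (nhds 0) := by
      have := (tendsto_pow_atTop_nhds_zero_of_lt_one hr0 hr1).mul_const x0
      simpa using this
    exact squeeze_zero (fun n => (main n).1.1) (fun n => (main n).2) htend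
  · intro x0 hx0
    set s : ℝ := (5 - 4*c)/3 with hs
    have hs0 : 0 ≤ s := by simp only [hs]; linarith
    have hs1 : s < 1 := by simp only [hs]; linarith
    have key : ∀ x, x ∈ Set.Icc (2/3:ℝ) 1 → f x ∈ Set.Icc (2/3:ℝ) 1 ∧ 1 - f x ≤ s * (1 - x) := by
      intro x hx
      obtain ⟨hx2, hx1⟩ := hx
      rw [hf3 x ⟨hx2, hx1⟩]
      refine ⟨⟨?_, ?_⟩, ?_⟩
      · nlinarith [mul_nonneg (by linarith : (0:ℝ) ≤ x) (by linarith : (0:ℝ) ≤ 1 - x)]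
      · nlinarith [mul_nonneg (by linarith : (0:ℝ) ≤ 1 - x) (by nlinarith : (0:ℝ) ≤ 1 - (2*c-1)*x)]
      · nlinarith [mul_nonneg (mul_nonneg (by linarith : (0:ℝ) ≤ 1 - x) (by linarith : (0:ℝ) ≤ 2*c - 1)) (by linarith : (0:ℝ) ≤ x - 2/3)]
    have main : ∀ n : ℕ, f^[n] x0 ∈ Set.Icc (2/3:ℝ) 1 ∧ 1 - f^[n] x0 ≤ s ^ n * (1 - x0) := by
      intro n
      induction n with
      | zero => simpa using hx0
      | succ n ih =>
        obtain ⟨hmem, hle⟩ := ih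
        obtain ⟨hmem', hle'⟩ := key _ hmem
        rw [Function.iterate_succ_apply']
        refine ⟨hmem', ?_⟩
        calc 1 - f (f^[n] x0) ≤ s * (1 - f^[n] x0) := hle'
          _ ≤ s * (s ^ n * (1 - x0)) := mul_le_mul_of_nonneg_left hle hs0
          _ = s ^ (n+1) * (1 - x0) := by ring
    have htend0 : Filter.Tendsto (fun n : ℕ => 1 - f^[n] x0) Filter.atTop (nhds 0) := by
      have htend : Filter.Tendsto (fun n : ℕ => s ^ n * (1 - x0)) Filter.atTop (nhds 0) := by
        have := (tendsto_pow_atTop_nhds_zero_of_lt_one hs0 hs1).mul_const (1 - x0)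
        simpa using this
      exact squeeze_zero (fun n => by linarith [(main n).1.2]) (fun n => (main n).2) htend
    have := (tendsto_const_nhds (x := (1:ℝ)) (f := Filter.atTop (α := ℕ))).sub htend0
    simpa using this
end
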